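/- (Theorem 3(iii), collapse part.) Suppose 𝔼[L_A] > 0, 𝔼[L_B] > 0, and set a = 𝔼[L_A] + β_B·𝔼[L_B], b = 𝔼[L_B] + β_A·𝔼[L_A]. Fix S_total > 0 and let s_A = S_total·a/(a+b), s_B = S_total·b/(a+b), p*_opt = S_total/(S_total + a + b). Assume S_A = s_A almost surely and S_B = s_B almost surely. Then for every attack size p with p*_opt < p < 1, the set of stable points is empty: 𝒫 = ∅ (the system collapses completely). -/

import Mathlib

open MeasureTheory ProbabilityTheory

variable {Ω : Type*} [MeasureSpace Ω]

/-- The survival event `E(x,y) = {S_A > x + β_B·y} ∩ {S_B > y + β_A·x}`. -/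
def survEvent (SA SB : Ω → ℝ) (βA βB x y : ℝ) : Set Ω :=
  {ω | x + βB * y < SA ω} ∩ {ω | y + βA * x < SB ω}

/-- `g(x,y) = (𝔼[L] − (1−p)·𝔼[L·1_{E(x,y)}]) / ((1−p)·ℙ[E(x,y)])`; with `L = L_A` this is the
function `g` of the paper, with `L = L_B` it is the function `h`. -/
noncomputable def gFun (L SA SB : Ω → ℝ) (βA βB p x y : ℝ) : ℝ :=
  ((∫ ω, L ω) - (1 - p) * ∫ ω in survEvent SA SB βA βB x y, L ω) /
    ((1 - p) * ((ℙ : Measure Ω) (survEvent SA SB βA βB x y)).toReal)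

/-- The set 𝒫 of stable points. -/
noncomputable def stableSet (LA LB SA SB : Ω → ℝ) (βA βB p : ℝ) : Set (ℝ × ℝ) :=
  {q | 0 ≤ q.1 ∧ 0 ≤ q.2 ∧ 0 < (ℙ : Measure Ω) (survEvent SA SB βA βB q.1 q.2) ∧
    gFun LA SA SB βA βB p q.1 q.2 ≤ q.1 ∧ gFun LB SA SB βA βB p q.1 q.2 ≤ q.2}

/-!
With deterministic free spaces the survival event `E(x, y)` is either null or almost sure.
A stable point needs `ℙ[E(x, y)] > 0`, so `E(x, y)` is almost sure and the stability conditions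
reduce to `(1 - p)·x ≥ p·𝔼[L_A]` and `(1 - p)·y ≥ p·𝔼[L_B]`. Then
`p·a ≤ (1 - p)(x + β_B·y) < (1 - p)·s_A = (1 - p)·S_total·a/(a + b)`, i.e. `p < p*_opt`.
-/

section survEvent

variable {μ : Measure Ω} {SA SB : Ω → ℝ} {sA sB βA βB x y : ℝ}

theorem lt_of_measure_survEvent_ne_zero (hSA : ∀ᵐ ω ∂μ, SA ω = sA)
    (hSB : ∀ᵐ ω ∂μ, SB ω = sB) (hE : μ (survEvent SA SB βA βB x y) ≠ 0) :
    x + βB * y < sA ∧ y + βA * x < sB := by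
  obtain ⟨ω, ⟨hωA, hωB⟩, hA, hB⟩ :=
    Measure.exists_mem_of_measure_ne_zero_of_ae hE (ae_restrict_of_ae (hSA.and hSB))
  exact ⟨hA ▸ hωA, hB ▸ hωB⟩

theorem survEvent_ae_eq_univ (hSA : ∀ᵐ ω ∂μ, SA ω = sA) (hSB : ∀ᵐ ω ∂μ, SB ω = sB)
    (hA : x + βB * y < sA) (hB : y + βA * x < sB) :
    survEvent SA SB βA βB x y =ᵐ[μ] Set.univ := by
  refine Filter.eventuallyEq_univ.mpr ((hSA.and hSB).mono fun ω hω => ?_)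
  exact ⟨show x + βB * y < SA ω from hω.1 ▸ hA, show y + βA * x < SB ω from hω.2 ▸ hB⟩

end survEvent

theorem gFun_eq_of_survEvent_ae_eq_univ [IsProbabilityMeasure (ℙ : Measure Ω)]
    {L SA SB : Ω → ℝ} {βA βB p x y : ℝ}
    (hE : survEvent SA SB βA βB x y =ᵐ[(ℙ : Measure Ω)] Set.univ) :
    gFun L SA SB βA βB p x y = p * (∫ ω, L ω) / (1 - p) := by
  rw [gFun, setIntegral_congr_set hE, setIntegral_univ, measure_congr hE, measure_univ,
    ENNReal.toReal_one, mul_one]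
  ring

theorem attack_lt_of_load_absorbed {mA mB βB a b S x y p : ℝ} (hβB : 0 ≤ βB)
    (ha : a = mA + βB * mB) (hapos : 0 < a) (hab : 0 < a + b) (hS : 0 < S) (hp1 : p < 1)
    (hx : p * mA / (1 - p) ≤ x) (hy : p * mB / (1 - p) ≤ y)
    (hA : x + βB * y < S * a / (a + b)) :
    p < S / (S + a + b) := by
  have h1p : 0 < 1 - p := by linarith
  rw [div_le_iff₀ h1p] at hx hy
  have hload : p * a ≤ (1 - p) * (x + βB * y) := by
    rw [ha]; linarith [mul_le_mul_of_nonneg_left hy hβB]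
  have hcross : p * (a + b) * a < (1 - p) * S * a :=
    calc p * (a + b) * a = p * a * (a + b) := by ring
      _ ≤ (1 - p) * (x + βB * y) * (a + b) := by gcongr
      _ < (1 - p) * (S * a / (a + b)) * (a + b) := by gcongr
      _ = (1 - p) * S * a := by field_simp
  have := lt_of_mul_lt_mul_right hcross hapos.le
  rw [lt_div_iff₀ (by linarith)]
  linarith

theorem stmt14_general [IsProbabilityMeasure (ℙ : Measure Ω)]
    (LA LB SA SB : Ω → ℝ)
    (βA βB : ℝ) (hβA : 0 ≤ βA) (hβB : 0 ≤ βB)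
    (hLApos : 0 < ∫ ω, LA ω) (hLBpos : 0 < ∫ ω, LB ω)
    (a b : ℝ)
    (ha : a = (∫ ω, LA ω) + βB * ∫ ω, LB ω)
    (hb : b = (∫ ω, LB ω) + βA * ∫ ω, LA ω)
    (Stot : ℝ) (hStot : 0 < Stot)
    (sA sB popt : ℝ)
    (hsA : sA = Stot * a / (a + b))
    (hpopt : popt = Stot / (Stot + a + b))
    (hSA : ∀ᵐ ω ∂(ℙ : Measure Ω), SA ω = sA)
    (hSB : ∀ᵐ ω ∂(ℙ : Measure Ω), SB ω = sB)
    (p : ℝ) (hpo : popt < p) (hp1 : p < 1) :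
    stableSet LA LB SA SB βA βB p = ∅ := by
  have hapos : 0 < a := by rw [ha]; positivity
  have hab : 0 < a + b := by rw [ha, hb]; positivity
  refine Set.eq_empty_of_forall_notMem fun ⟨x, y⟩ ⟨_, _, hE, hgx, hgy⟩ => hpo.not_ge ?_
  obtain ⟨hA, hB⟩ := lt_of_measure_survEvent_ne_zero hSA hSB hE.ne'
  have hfull := survEvent_ae_eq_univ hSA hSB hA hB
  rw [gFun_eq_of_survEvent_ae_eq_univ hfull] at hgx hgy
  rw [hpopt]
  exact (attack_lt_of_load_absorbed hβB ha hapos hab hStot hp1 hgx hgy (hsA ▸ hA)).le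

theorem stmt14 [IsProbabilityMeasure (ℙ : Measure Ω)]
    (LA LB SA SB : Ω → ℝ)
    (hLA0 : ∀ ω, 0 ≤ LA ω) (hLB0 : ∀ ω, 0 ≤ LB ω)
    (hLA : Integrable LA (ℙ : Measure Ω)) (hLB : Integrable LB (ℙ : Measure Ω))
    (hSAm : Measurable SA) (hSBm : Measurable SB)
    (βA βB : ℝ) (hβA : 0 ≤ βA) (hβB : 0 ≤ βB)
    (hLApos : 0 < ∫ ω, LA ω) (hLBpos : 0 < ∫ ω, LB ω)
    (a b : ℝ)
    (ha : a = (∫ ω, LA ω) + βB * ∫ ω, LB ω)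
    (hb : b = (∫ ω, LB ω) + βA * ∫ ω, LA ω)
    (Stot : ℝ) (hStot : 0 < Stot)
    (sA sB popt : ℝ)
    (hsA : sA = Stot * a / (a + b)) (hsB : sB = Stot * b / (a + b))
    (hpopt : popt = Stot / (Stot + a + b))
    (hSA : ∀ᵐ ω ∂(ℙ : Measure Ω), SA ω = sA)
    (hSB : ∀ᵐ ω ∂(ℙ : Measure Ω), SB ω = sB)
    (p : ℝ) (hpo : popt < p) (hp1 : p < 1) :
    stableSet LA LB SA SB βA βB p = ∅ :=
  stmt14_general LA LB SA SB βA βB hβA hβB hLApos hLBpos a b ha hb Stot hStot sA sB popt hsA hpopt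
    hSA hSB p hpo hp1
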